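/- For every parameter vector z ∈ ℝ⁴ and every point x ∈ ℝ⁴, the map τ_z is an isometry of the McLenaghan–Tariq–Tupper metric: for all indices i, j ∈ {1,2,3,4}, Σ_{k,l} g_{kl}(τ_z(x)) · (∂τ_z^k/∂x^i)(x) · (∂τ_z^l/∂x^j)(x) = g_{ij}(x). -/

import Mathlib

/-- Partial derivative `∂f/∂xⁱ` of a real-valued function on `ℝ⁴`. -/
noncomputable def pd (i : Fin 4) (f : (Fin 4 → ℝ) → ℝ) (x : Fin 4 → ℝ) : ℝ :=
  fderiv ℝ f x (Pi.single i 1)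
/-- The McLenaghan–Tariq–Tupper metric components `g_{ij}(x)` (indices `0,…,3` for `1,…,4`). -/
noncomputable def mttMetric (k : ℝ) (x : Fin 4 → ℝ) : Matrix (Fin 4) (Fin 4) ℝ :=
  !![1, 1, 0, -k * x 2;
     1, 0, 0, -k * x 2;
     0, 0, -Real.exp (-(k * x 1)), 0;
     -k * x 2, -k * x 2, 0, k ^ 2 * (x 2) ^ 2 - Real.exp (k * x 1)]
/-- The transformation `τ_z : ℝ⁴ → ℝ⁴` (indices `0,…,3` for coordinates `1,…,4`). -/
noncomputable def τ (k : ℝ) (z x : Fin 4 → ℝ) : Fin 4 → ℝ :=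
  ![x 0 - z 0 + 2 * z 3 - k * Real.exp (k * z 3 / 2) * z 2 * x 3,
    x 1 - z 3,
    x 2 * Real.exp (-(k * z 3) / 2) - z 2,
    x 3 * Real.exp (k * z 3 / 2) - z 1]

/-! `τ_z` is affine, so its Jacobian `J` is constant and the isometry condition is the matrix
identity `Jᵀ g(τ_z x) J = g(x)`. The shift `x² ↦ x² − z⁴` multiplies `exp (∓k x²)` by
`exp (±k z⁴)`, which is exactly compensated by the scalings `x³ ↦ e^{−k z⁴/2} x³` and
`x⁴ ↦ e^{k z⁴/2} x⁴`. -/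

open Matrix

theorem fderiv_dotProduct_add_const_apply_single {𝕜 ι : Type*} [NontriviallyNormedField 𝕜]
    [Fintype ι] [DecidableEq ι] (a : ι → 𝕜) (c : 𝕜) (x : ι → 𝕜) (i : ι) :
    fderiv 𝕜 (fun y => a ⬝ᵥ y + c) x (Pi.single i 1) = a i := by
  let L : (ι → 𝕜) →L[𝕜] 𝕜 := ∑ m, a m • ContinuousLinearMap.proj m
  have hL : ∀ y, L y = a ⬝ᵥ y := fun y => by simp [L, dotProduct]
  have hderiv : HasFDerivAt (fun y => a ⬝ᵥ y + c) L x := by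
    simpa only [hL] using L.hasFDerivAt.add_const c
  rw [hderiv.fderiv, hL, dotProduct_single, mul_one]

/-- Entry `(a, i)` is `∂τ_z^a/∂xⁱ`. -/
noncomputable def tauJacobian (k : ℝ) (z : Fin 4 → ℝ) : Matrix (Fin 4) (Fin 4) ℝ :=
  let e := Real.exp (k * z 3 / 2)
  !![1, 0, 0, -(k * e * z 2);
     0, 1, 0, 0;
     0, 0, e⁻¹, 0;
     0, 0, 0, e]

theorem tau_eq_mulVec_add (k : ℝ) (z x : Fin 4 → ℝ) :
    τ k z x = tauJacobian k z *ᵥ x + ![2 * z 3 - z 0, -z 3, -z 2, -z 1] := by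
  have he : Real.exp (-(k * z 3) / 2) = (Real.exp (k * z 3 / 2))⁻¹ := by
    rw [← Real.exp_neg, neg_div]
  ext a
  fin_cases a <;> simp [τ, tauJacobian, dotProduct, Fin.sum_univ_four, he] <;> ring

theorem pd_tau (k : ℝ) (z x : Fin 4 → ℝ) (a i : Fin 4) :
    pd i (fun y => τ k z y a) x = tauJacobian k z a i := by
  simp only [pd, tau_eq_mulVec_add, Pi.add_apply, mulVec]
  exact fderiv_dotProduct_add_const_apply_single _ _ x i

theorem tauJacobian_transpose_mul_mttMetric_mul (k : ℝ) (z x : Fin 4 → ℝ) :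
    (tauJacobian k z)ᵀ * mttMetric k (τ k z x) * tauJacobian k z = mttMetric k x := by
  set e := Real.exp (k * z 3 / 2) with he_def
  have he : e ≠ 0 := Real.exp_ne_zero _
  have hinv : Real.exp (-(k * z 3) / 2) = e⁻¹ := by rw [← Real.exp_neg, neg_div]
  have hpos : Real.exp (-(k * (x 1 - z 3))) = Real.exp (-(k * x 1)) * e ^ 2 := by
    rw [he_def, ← Real.exp_nat_mul, ← Real.exp_add]; ring_nf
  have hneg : Real.exp (k * (x 1 - z 3)) = Real.exp (k * x 1) / e ^ 2 := by
    rw [he_def, ← Real.exp_nat_mul, ← Real.exp_sub]; ring_nf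
  ext i j
  fin_cases i <;> fin_cases j <;>
    simp [mttMetric, τ, tauJacobian, ← he_def, hinv, hpos, hneg, mul_apply, Fin.sum_univ_four] <;>
    field_simp <;> ring

theorem tau_isometry_general (k : ℝ) (z x : Fin 4 → ℝ) (i j : Fin 4) :
    ∑ a : Fin 4, ∑ b : Fin 4,
      mttMetric k (τ k z x) a b * pd i (fun y => τ k z y a) x * pd j (fun y => τ k z y b) x
      = mttMetric k x i j := by
  rw [← tauJacobian_transpose_mul_mttMetric_mul k z x]
  simp only [pd_tau, Matrix.mul_apply, transpose_apply, Finset.sum_mul]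
  rw [Finset.sum_comm]
  exact Finset.sum_congr rfl fun a _ => Finset.sum_congr rfl fun b _ => by ring

/-- Every `τ_z` is an isometry of the McLenaghan–Tariq–Tupper metric:
`Σ_{k,l} g_{kl}(τ_z x) ∂_i τ_z^k ∂_j τ_z^l = g_{ij}(x)`. -/
theorem tau_isometry (k : ℝ) (hk : 0 < k) (z x : Fin 4 → ℝ) (i j : Fin 4) :
    ∑ a : Fin 4, ∑ b : Fin 4,
      mttMetric k (τ k z x) a b * pd i (fun y => τ k z y a) x * pd j (fun y => τ k z y b) x
      = mttMetric k x i j :=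
  tau_isometry_general k z x i j
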